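/- A subset A of a generalized topological space is sg_λ-closed if and only if scl_λ(A) ∖ A contains no nonempty sλ-closed set. -/
import Mathlib


open Set

variable {X : Type*}

def IsGT (μ : Set (Set X)) : Prop :=
  ∅ ∈ μ ∧ ∀ S : Set (Set X), S ⊆ μ → ⋃₀ S ∈ μ

def muInt (μ : Set (Set X)) (A : Set X) : Set X := ⋃₀ {U | U ∈ μ ∧ U ⊆ A}

def muCl (μ : Set (Set X)) (A : Set X) : Set X := ⋂₀ {F | Fᶜ ∈ μ ∧ A ⊆ F}

def sOpen (μ : Set (Set X)) (A : Set X) : Prop := A ⊆ muCl μ (muInt μ A)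

def sClosed (μ : Set (Set X)) (A : Set X) : Prop := sOpen μ Aᶜ

def sInt (μ : Set (Set X)) (A : Set X) : Set X := ⋃₀ {U | sOpen μ U ∧ U ⊆ A}

def sCl (μ : Set (Set X)) (A : Set X) : Set X := ⋂₀ {F | sClosed μ F ∧ A ⊆ F}

def sWedge (μ : Set (Set X)) (A : Set X) : Set X := ⋂₀ {U | sOpen μ U ∧ A ⊆ U}

def sVee (μ : Set (Set X)) (A : Set X) : Set X := ⋃₀ {F | sClosed μ F ∧ F ⊆ A}

def sLambdaClosed (μ : Set (Set X)) (A : Set X) : Prop :=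
  ∃ K P : Set X, K = sWedge μ K ∧ sClosed μ P ∧ A = K ∩ P

def sLambdaOpen (μ : Set (Set X)) (A : Set X) : Prop := sLambdaClosed μ Aᶜ

def sclL (μ : Set (Set X)) (A : Set X) : Set X := ⋂₀ {F | sLambdaClosed μ F ∧ A ⊆ F}

def sIntL (μ : Set (Set X)) (A : Set X) : Set X := ⋃₀ {U | sLambdaOpen μ U ∧ U ⊆ A}

def sWedgeL (μ : Set (Set X)) (A : Set X) : Set X := ⋂₀ {U | sLambdaOpen μ U ∧ A ⊆ U}

def sVeeL (μ : Set (Set X)) (A : Set X) : Set X := ⋃₀ {F | sLambdaClosed μ F ∧ F ⊆ A}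

def sgClosed (μ : Set (Set X)) (A : Set X) : Prop :=
  ∀ U : Set X, sLambdaOpen μ U → A ⊆ U → sclL μ A ⊆ U

def sgOpen (μ : Set (Set X)) (A : Set X) : Prop := sgClosed μ Aᶜ

def sBetaClosed (μ : Set (Set X)) (A : Set X) : Prop :=
  ∃ H Q : Set X, H = sWedgeL μ H ∧ sLambdaClosed μ Q ∧ A = H ∩ Q

def sT0 (μ : Set (Set X)) : Prop :=
  ∀ x y : X, x ≠ y → ∃ U : Set X, sLambdaOpen μ U ∧
    ((x ∈ U ∧ y ∉ U) ∨ (y ∈ U ∧ x ∉ U))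

def sT1 (μ : Set (Set X)) : Prop :=
  ∀ x y : X, x ≠ y → ∃ U V : Set X, sLambdaOpen μ U ∧ sLambdaOpen μ V ∧
    x ∈ U ∧ y ∉ U ∧ y ∈ V ∧ x ∉ V

lemma muInt_mono' (μ : Set (Set X)) {A B : Set X} (h : A ⊆ B) :
    muInt μ A ⊆ muInt μ B := by
  intro x hx
  obtain ⟨U, ⟨hU, hUA⟩, hxU⟩ := hx
  exact ⟨U, ⟨hU, hUA.trans h⟩, hxU⟩

lemma muCl_mono' (μ : Set (Set X)) {A B : Set X} (h : A ⊆ B) :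
    muCl μ A ⊆ muCl μ B := by
  intro x hx F hF
  exact hx F ⟨hF.1, h.trans hF.2⟩

lemma sOpen_iUnion' {μ : Set (Set X)} {ι : Sort*} {U : ι → Set X}
    (h : ∀ i, sOpen μ (U i)) : sOpen μ (⋃ i, U i) := by
  intro x hx
  obtain ⟨_, ⟨i, rfl⟩, hxi⟩ := hx
  exact muCl_mono' μ (muInt_mono' μ (Set.subset_iUnion U i)) (h i hxi)

lemma subset_sWedge' (μ : Set (Set X)) (A : Set X) : A ⊆ sWedge μ A := by
  intro x hx U hU
  exact hU.2 hx

lemma sWedge_mono' (μ : Set (Set X)) {A B : Set X} (h : A ⊆ B) :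
    sWedge μ A ⊆ sWedge μ B := by
  intro x hx U hU
  exact hx U ⟨hU.1, h.trans hU.2⟩

lemma sLambdaClosed_sInter' {μ : Set (Set X)} {S : Set (Set X)}
    (h : ∀ F ∈ S, sLambdaClosed μ F) : sLambdaClosed μ (⋂₀ S) := by
  classical
  set K : S → Set X := fun F => (h F F.2).choose with hK
  have hspec : ∀ F : S, ∃ P, (K F) = sWedge μ (K F) ∧ sClosed μ P ∧
      (F : Set X) = K F ∩ P := fun F => (h F F.2).choose_spec
  set P : S → Set X := fun F => (hspec F).choose with hP
  have hPspec : ∀ F : S, (K F) = sWedge μ (K F) ∧ sClosed μ (P F) ∧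
      (F : Set X) = K F ∩ P F := fun F => (hspec F).choose_spec
  refine ⟨⋂ F : S, K F, ⋂ F : S, P F, ?_, ?_, ?_⟩
  · refine subset_antisymm (subset_sWedge' μ _) ?_
    refine Set.subset_iInter fun F => ?_
    calc sWedge μ (⋂ F : S, K F) ⊆ sWedge μ (K F) :=
          sWedge_mono' μ (Set.iInter_subset _ F)
      _ = K F := ((hPspec F).1).symm
  · show sOpen μ (⋂ F : S, P F)ᶜ
    rw [Set.compl_iInter]
    exact sOpen_iUnion' fun F => (hPspec F).2.1
  · ext x
    simp only [Set.mem_sInter, Set.mem_inter_iff, Set.mem_iInter]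
    constructor
    · intro hx
      refine ⟨fun F => ?_, fun F => ?_⟩
      · have := hx F F.2
        rw [(hPspec F).2.2] at this
        exact this.1
      · have := hx F F.2
        rw [(hPspec F).2.2] at this
        exact this.2
    · intro ⟨h1, h2⟩ F hF
      have := (hPspec ⟨F, hF⟩).2.2
      show x ∈ F
      rw [show F = (⟨F, hF⟩ : S).1 from rfl, this]
      exact ⟨h1 ⟨F, hF⟩, h2 ⟨F, hF⟩⟩

lemma sLambdaClosed_sclL' (μ : Set (Set X)) (A : Set X) :
    sLambdaClosed μ (sclL μ A) :=
  sLambdaClosed_sInter' (fun _ hF => hF.1)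

lemma sLambdaClosed_inter' {μ : Set (Set X)} {F G : Set X}
    (hF : sLambdaClosed μ F) (hG : sLambdaClosed μ G) :
    sLambdaClosed μ (F ∩ G) := by
  have : F ∩ G = ⋂₀ {F, G} := by simp [Set.sInter_pair]
  rw [this]
  exact sLambdaClosed_sInter' (by rintro H (rfl | rfl) <;> assumption)

lemma subset_sclL' (μ : Set (Set X)) (A : Set X) : A ⊆ sclL μ A :=
  fun _ hx F hF => hF.2 hx

theorem stmt11 (μ : Set (Set X)) (hμ : IsGT μ) (A : Set X) :
    sgClosed μ A ↔ ∀ F : Set X, sLambdaClosed μ F → F ⊆ sclL μ A \ A → F = ∅ := by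
  constructor
  · intro h F hF hsub
    have hAU : A ⊆ Fᶜ := fun x hx hxF => (hsub hxF).2 hx
    have hopen : sLambdaOpen μ Fᶜ := by
      show sLambdaClosed μ Fᶜᶜ
      rwa [compl_compl]
    have hcl : sclL μ A ⊆ Fᶜ := h Fᶜ hopen hAU
    ext x
    simp only [Set.mem_empty_iff_false, iff_false]
    intro hxF
    exact hcl (hsub hxF).1 hxF
  · intro h U hU hAU
    set F := sclL μ A ∩ Uᶜ with hFdef
    have hFclosed : sLambdaClosed μ F :=
      sLambdaClosed_inter' (sLambdaClosed_sclL' μ A) hU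
    have hFsub : F ⊆ sclL μ A \ A := by
      rintro x ⟨hx1, hx2⟩
      exact ⟨hx1, fun hxA => hx2 (hAU hxA)⟩
    have hFempty := h F hFclosed hFsub
    intro x hx
    by_contra hxU
    have : x ∈ F := ⟨hx, hxU⟩
    rw [hFempty] at this
    exact this
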